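/- arXiv:2004.02112 — 8 statements merged into one kernel-verified Lean document; each statement's English description precedes it below -/
import Mathlib

section
/- Let (g, ⟨·,·⟩, J) be an almost Hermitian Lie algebra and φ : g → Der_u(g) a modification, i.e. a Lie algebra homomorphism into the skew-Hermitian derivations with φ([g,g]) = 0 and φ(Im φ(g)) = 0. Then the modified bracket [X,Y]_φ := [X,Y] + φ(X)Y - φ(Y)X satisfies the Jacobi identity, so (g, [·,·]_φ) is a Lie algebra. -/
/-- The modified bracket `[X,Y]_φ = [X,Y] + φ(X)Y - φ(Y)X`. -/
def modBracket {g : Type*} [LieRing g] [LieAlgebra ℝ g]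
    (φ : g →ₗ[ℝ] g →ₗ[ℝ] g) (x y : g) : g :=
  ⁅x, y⁆ + φ x y - φ y x

/-- For a modification `φ` of an almost Hermitian Lie algebra
`(g, ⟨·,·⟩, J)`, the modified bracket satisfies the Jacobi identity, so
`(g, [·,·]_φ)` is a Lie algebra. -/
theorem stmt2 (g : Type*) [LieRing g] [LieAlgebra ℝ g] [FiniteDimensional ℝ g]
    -- the scalar product ⟨·,·⟩
    (ip : g →ₗ[ℝ] g →ₗ[ℝ] ℝ)
    (ipsymm : ∀ x y : g, ip x y = ip y x)
    (ippos : ∀ x : g, x ≠ 0 → 0 < ip x x)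
    -- the almost complex structure J, skew-symmetric
    (J : g →ₗ[ℝ] g) (hJ2 : ∀ x : g, J (J x) = -x)
    (hJskew : ∀ x y : g, ip (J x) y + ip x (J y) = 0)
    (φ : g →ₗ[ℝ] g →ₗ[ℝ] g)
    -- each φ(X) is a derivation of g
    (hder : ∀ x a b : g, φ x ⁅a, b⁆ = ⁅φ x a, b⁆ + ⁅a, φ x b⁆)
    -- each φ(X) is skew-symmetric
    (hskew : ∀ x a b : g, ip (φ x a) b + ip a (φ x b) = 0)
    -- each φ(X) commutes with J (φ takes values in u(g))
    (hJcomm : ∀ x a : g, φ x (J a) = J (φ x a))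
    -- φ is a Lie algebra homomorphism
    (hhom : ∀ x y : g, φ ⁅x, y⁆ = φ x ∘ₗ φ y - φ y ∘ₗ φ x)
    -- φ([g,g]) = 0
    (h1 : ∀ x y : g, φ ⁅x, y⁆ = 0)
    -- φ(Im φ(g)) = 0
    (h2 : ∀ x y : g, φ (φ x y) = 0) :
    ∀ x y z : g,
      modBracket φ (modBracket φ x y) z + modBracket φ (modBracket φ y z) x +
        modBracket φ (modBracket φ z x) y = 0 := by
  intro x y z
  have hcomm : ∀ a b c : g, φ a (φ b c) = φ b (φ a c) := by
    intro a b c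
    have h : φ a ∘ₗ φ b - φ b ∘ₗ φ a = 0 := (hhom a b).symm.trans (h1 a b)
    exact DFunLike.congr_fun (sub_eq_zero.mp h) c
  have jac : ⁅⁅x,y⁆,z⁆ + ⁅⁅y,z⁆,x⁆ + ⁅⁅z,x⁆,y⁆ = (0:g) := by
    have h := lie_jacobi x y z
    rw [← lie_skew x ⁅y,z⁆, ← lie_skew y ⁅z,x⁆, ← lie_skew z ⁅x,y⁆] at h
    calc ⁅⁅x,y⁆,z⁆ + ⁅⁅y,z⁆,x⁆ + ⁅⁅z,x⁆,y⁆
        = -(-⁅⁅y, z⁆, x⁆ + -⁅⁅z, x⁆, y⁆ + -⁅⁅x, y⁆, z⁆) := by abel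
      _ = -0 := by rw [h]
      _ = 0 := neg_zero
  simp only [modBracket, map_add, map_sub, h1, h2, LinearMap.add_apply,
    LinearMap.sub_apply, LinearMap.zero_apply, add_lie, sub_lie, hder]
  rw [hcomm z x y, hcomm z y x, hcomm x y z,
    (lie_skew x (φ z y)).symm, (lie_skew y (φ x z)).symm, (lie_skew z (φ y x)).symm]
  conv_rhs => rw [← jac]
  abel
end

section
/- Let (g, ⟨·,·⟩, J) be an almost Hermitian Lie algebra and φ a modification of it. Then the Nijenhuis tensor of J with respect to the modified Lie bracket [X,Y]_φ = [X,Y] + φ(X)Y - φ(Y)X equals the Nijenhuis tensor of J with respect to the original bracket. In particular, J is integrable on g_φ if and only if it is integrable on g. -/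
/-- The Nijenhuis tensor of `J` with respect to the modified bracket
equals the Nijenhuis tensor of `J` with respect to the original bracket; in particular
`J` is integrable on `g_φ` iff it is integrable on `g`. -/
theorem stmt3 (g : Type*) [LieRing g] [LieAlgebra ℝ g] [FiniteDimensional ℝ g]
    (ip : g →ₗ[ℝ] g →ₗ[ℝ] ℝ)
    (ipsymm : ∀ x y : g, ip x y = ip y x)
    (ippos : ∀ x : g, x ≠ 0 → 0 < ip x x)
    (J : g →ₗ[ℝ] g) (hJ2 : ∀ x : g, J (J x) = -x)
    (hJskew : ∀ x y : g, ip (J x) y + ip x (J y) = 0)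
    (φ : g →ₗ[ℝ] g →ₗ[ℝ] g)
    (hder : ∀ x a b : g, φ x ⁅a, b⁆ = ⁅φ x a, b⁆ + ⁅a, φ x b⁆)
    (hskew : ∀ x a b : g, ip (φ x a) b + ip a (φ x b) = 0)
    (hJcomm : ∀ x a : g, φ x (J a) = J (φ x a))
    (hhom : ∀ x y : g, φ ⁅x, y⁆ = φ x ∘ₗ φ y - φ y ∘ₗ φ x)
    (h1 : ∀ x y : g, φ ⁅x, y⁆ = 0)
    (h2 : ∀ x y : g, φ (φ x y) = 0) :
    (∀ x y : g,
      modBracket φ (J x) (J y) - modBracket φ x y - J (modBracket φ x (J y)) -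
          J (modBracket φ (J x) y) =
        ⁅J x, J y⁆ - ⁅x, y⁆ - J ⁅x, J y⁆ - J ⁅J x, y⁆) ∧
    ((∀ x y : g,
        modBracket φ (J x) (J y) - modBracket φ x y - J (modBracket φ x (J y)) -
          J (modBracket φ (J x) y) = 0) ↔
      (∀ x y : g, ⁅J x, J y⁆ - ⁅x, y⁆ - J ⁅x, J y⁆ - J ⁅J x, y⁆ = 0)) := by
  have key : ∀ x y : g,
      modBracket φ (J x) (J y) - modBracket φ x y - J (modBracket φ x (J y)) -
          J (modBracket φ (J x) y) =
        ⁅J x, J y⁆ - ⁅x, y⁆ - J ⁅x, J y⁆ - J ⁅J x, y⁆ := by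
    intro x y
    simp only [modBracket, map_add, map_sub, hJcomm, hJ2]
    abel
  exact ⟨key, by constructor <;> intro h x y <;> [rw [← key x y]; rw [key x y]] <;> exact h x y⟩
end

section
/- Let (g, ⟨·,·⟩) be a Riemannian Lie algebra and φ a modification (homomorphism φ : g → Der(g) ∩ so(g) with φ([g,g]) = 0 and φ(Im φ(g)) = 0). Then the Levi-Civita connection ∇^φ of the modified Lie algebra g_φ (with the same scalar product) satisfies ∇^φ = ∇ + φ, where ∇ is the Levi-Civita connection of g. Equivalently, ∇ + φ is metric and torsion-free with respect to the modified bracket. -/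
/-- For a modification `φ` of a Riemannian Lie algebra `(g, ⟨·,·⟩)`,
the Levi-Civita connection of the modified Lie algebra `g_φ` is `∇^φ = ∇ + φ`:
equivalently, `∇ + φ` is metric and torsion-free with respect to the modified bracket,
and it satisfies the Koszul formula for the modified bracket. -/
theorem stmt4 (g : Type*) [LieRing g] [LieAlgebra ℝ g] [FiniteDimensional ℝ g]
    (ip : g →ₗ[ℝ] g →ₗ[ℝ] ℝ)
    (ipsymm : ∀ x y : g, ip x y = ip y x)
    (ippos : ∀ x : g, x ≠ 0 → 0 < ip x x)
    (φ : g →ₗ[ℝ] g →ₗ[ℝ] g)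
    (hder : ∀ x a b : g, φ x ⁅a, b⁆ = ⁅φ x a, b⁆ + ⁅a, φ x b⁆)
    (hskew : ∀ x a b : g, ip (φ x a) b + ip a (φ x b) = 0)
    (hhom : ∀ x y : g, φ ⁅x, y⁆ = φ x ∘ₗ φ y - φ y ∘ₗ φ x)
    (h1 : ∀ x y : g, φ ⁅x, y⁆ = 0)
    (h2 : ∀ x y : g, φ (φ x y) = 0)
    -- ∇ is the Levi-Civita connection of g, given by the Koszul formula
    (nabla : g →ₗ[ℝ] g →ₗ[ℝ] g)
    (hKoszul : ∀ x y z : g,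
      2 * ip (nabla x y) z = ip ⁅x, y⁆ z - ip ⁅y, z⁆ x + ip ⁅z, x⁆ y) :
    -- ∇^φ = ∇ + φ is metric,
    (∀ x y z : g,
      ip (nabla x y + φ x y) z + ip y (nabla x z + φ x z) = 0) ∧
    -- torsion-free with respect to the modified bracket,
    (∀ x y : g,
      (nabla x y + φ x y) - (nabla y x + φ y x) = modBracket φ x y) ∧
    -- and satisfies the Koszul formula for the modified bracket.
    (∀ x y z : g,
      2 * ip (nabla x y + φ x y) z =
        ip (modBracket φ x y) z - ip (modBracket φ y z) x + ip (modBracket φ z x) y) := by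
  have eskew : ∀ a b c : g, ip ⁅a, b⁆ c = -ip ⁅b, a⁆ c := by
    intro a b c
    have h : (⁅a, b⁆ : g) = -⁅b, a⁆ := (lie_skew a b).symm
    rw [h, map_neg, LinearMap.neg_apply]
  have nd : ∀ v : g, (∀ z, ip v z = 0) → v = 0 := by
    intro v h
    by_contra hv
    have := ippos v hv
    rw [h v] at this
    exact lt_irrefl 0 this
  have hmet0 : ∀ x y z : g, ip (nabla x y) z + ip (nabla x z) y = 0 := by
    intro x y z
    have A := hKoszul x y z
    have B := hKoszul x z y
    have e1 : ip ⁅y, x⁆ z = -ip ⁅x, y⁆ z := eskew _ _ _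
    have e2 : ip ⁅z, x⁆ y = -ip ⁅x, z⁆ y := eskew _ _ _
    have e3 : ip ⁅z, y⁆ x = -ip ⁅y, z⁆ x := eskew _ _ _
    linarith
  have ht : ∀ x y : g, nabla x y - nabla y x = ⁅x, y⁆ := by
    intro x y
    have key : nabla x y - nabla y x - ⁅x, y⁆ = 0 := by
      apply nd
      intro z
      have A := hKoszul x y z
      have B := hKoszul y x z
      have e1 : ip ⁅y, x⁆ z = -ip ⁅x, y⁆ z := eskew _ _ _
      have e2 : ip ⁅z, y⁆ x = -ip ⁅y, z⁆ x := eskew _ _ _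
      have e3 : ip ⁅x, z⁆ y = -ip ⁅z, x⁆ y := eskew _ _ _
      have expand : ip (nabla x y - nabla y x - ⁅x, y⁆) z
          = ip (nabla x y) z - ip (nabla y x) z - ip ⁅x, y⁆ z := by
        simp [map_sub]
      rw [expand]
      linarith
    exact sub_eq_zero.mp key
  refine ⟨?_, ?_, ?_⟩
  · intro x y z
    have hm := hmet0 x y z
    have hs := hskew x y z
    have expand : ip (nabla x y + φ x y) z + ip y (nabla x z + φ x z)
        = (ip (nabla x y) z + ip (nabla x z) y) + (ip (φ x y) z + ip y (φ x z)) := by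
      simp [map_add]
      rw [ipsymm y (nabla x z)]
      ring
    rw [expand, hm, hs]
    ring
  · intro x y
    have h := ht x y
    unfold modBracket
    rw [← h]
    abel
  · intro x y z
    have A := hKoszul x y z
    have s1 := hskew x y z  -- ip (φ x y) z + ip y (φ x z) = 0
    have s2 := hskew y z x  -- ip (φ y z) x + ip z (φ y x) = 0
    have s3 := hskew z y x  -- ip (φ z y) x + ip y (φ z x) = 0
    have expand1 : 2 * ip (nabla x y + φ x y) z
        = 2 * ip (nabla x y) z + 2 * ip (φ x y) z := by
      simp [map_add]; ring
    have expand2 : ip (modBracket φ x y) z - ip (modBracket φ y z) x + ip (modBracket φ z x) y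
        = (ip ⁅x, y⁆ z - ip ⁅y, z⁆ x + ip ⁅z, x⁆ y)
          + (ip (φ x y) z - ip (φ y x) z)
          - (ip (φ y z) x - ip (φ z y) x)
          + (ip (φ z x) y - ip (φ x z) y) := by
      unfold modBracket
      simp [map_add, map_sub]
      ring
    rw [expand1, expand2]
    have t1 : ip y (φ x z) = ip (φ x z) y := ipsymm _ _
    have t2 : ip z (φ y x) = ip (φ y x) z := ipsymm _ _
    have t3 : ip y (φ z x) = ip (φ z x) y := ipsymm _ _
    linarith
end

section
/- Let g_ℂ = gl(2,ℂ) = ℂT ⊕ b, with b = ⟨U,V,W⟩_ℂ a complex Lie algebra with brackets [V,W] = ±(1/2)U, [U,V] = V, [U,W] = -W, and T central. If h ⊂ g_ℂ is a complex subalgebra with basis {T + δU, R} where R = qV + rW (q,r ∈ ℂ) and g_ℂ = h ⊕ h̄ (conjugation given by T̄=T, Ū=-U, V̄=-W, W̄=-V), then either (q ≠ 0, r = 0) or (q = 0, r ≠ 0); i.e. h = ⟨T+δU, V⟩_ℂ or h = ⟨T+δU, W⟩_ℂ, and necessarily Re(δ) ≠ 0. -/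
/-- In `g_ℂ = gl(2,ℂ) = ℂT ⊕ b` with `b = ⟨U,V,W⟩_ℂ`,
`[V,W] = ε(1/2)U`, `[U,V] = V`, `[U,W] = -W` and `T` central, if `h` is a complex
subalgebra with basis `{T + δU, R}`, `R = qV + rW`, and `g_ℂ = h ⊕ h̄`
(conjugation `T̄=T, Ū=-U, V̄=-W, W̄=-V`), then either `q ≠ 0, r = 0` or
`q = 0, r ≠ 0`, and necessarily `Re δ ≠ 0`. -/
theorem stmt8 (L : Type*) [LieRing L] [LieAlgebra ℂ L]
    [Module ℝ L] [IsScalarTower ℝ ℂ L]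
    (T U V W : L)
    (hindep : LinearIndependent ℂ ![T, U, V, W])
    (hspan : Submodule.span ℂ ({T, U, V, W} : Set L) = ⊤)
    (ε : ℝ) (hε : ε = 1 ∨ ε = -1)
    -- T is central
    (hTU : ⁅T, U⁆ = 0) (hTV : ⁅T, V⁆ = 0) (hTW : ⁅T, W⁆ = 0)
    -- brackets of b
    (hVW : ⁅V, W⁆ = ((ε / 2 : ℝ) : ℂ) • U)
    (hUV : ⁅U, V⁆ = V) (hUW : ⁅U, W⁆ = -W)
    -- the conjugation σ: an antilinear involution with the stated values
    (σ : L →ₗ[ℝ] L)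
    (hσ2 : ∀ x : L, σ (σ x) = x)
    (hσsmul : ∀ (z : ℂ) (x : L), σ (z • x) = (starRingEnd ℂ) z • σ x)
    (hσT : σ T = T) (hσU : σ U = -U) (hσV : σ V = -W) (hσW : σ W = -V)
    -- the subalgebra h with basis {T + δU, R}, R = qV + rW
    (δ q r : ℂ)
    (hsub : ∀ a ∈ Submodule.span ℂ ({T + δ • U, q • V + r • W} : Set L),
            ∀ b ∈ Submodule.span ℂ ({T + δ • U, q • V + r • W} : Set L),
              ⁅a, b⁆ ∈ Submodule.span ℂ ({T + δ • U, q • V + r • W} : Set L))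
    (hbasish : LinearIndependent ℂ ![T + δ • U, q • V + r • W])
    -- g_ℂ = h ⊕ h̄ (direct sum of vector spaces)
    (hcompl : IsCompl
      ((Submodule.span ℂ ({T + δ • U, q • V + r • W} : Set L)).restrictScalars ℝ)
      (Submodule.map σ
        ((Submodule.span ℂ ({T + δ • U, q • V + r • W} : Set L)).restrictScalars ℝ))) :
    ((q ≠ 0 ∧ r = 0) ∨ (q = 0 ∧ r ≠ 0)) ∧ δ.re ≠ 0 := by
  have hT0 : T ≠ 0 := by simpa using hindep.ne_zero 0
  have hx0 : T + δ • U ≠ 0 := by simpa using hbasish.ne_zero 0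
  have hy0 : q • V + r • W ≠ 0 := by simpa using hbasish.ne_zero 1
  have hxmem : T + δ • U ∈ Submodule.span ℂ ({T + δ • U, q • V + r • W} : Set L) :=
    Submodule.subset_span (by simp)
  have hymem : q • V + r • W ∈ Submodule.span ℂ ({T + δ • U, q • V + r • W} : Set L) :=
    Submodule.subset_span (by simp)
  have hdisj := hcompl.disjoint
  -- δ ≠ 0
  have hδ : δ ≠ 0 := by
    intro h0
    have hT : T ∈ Submodule.span ℂ ({T + δ • U, q • V + r • W} : Set L) := by
      simpa [h0] using hxmem
    have hTσ : T ∈ Submodule.map σ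
        ((Submodule.span ℂ ({T + δ • U, q • V + r • W} : Set L)).restrictScalars ℝ) :=
      ⟨T, hT, hσT⟩
    exact hT0 (Submodule.disjoint_def.mp hdisj T hT hTσ)
  -- Re δ ≠ 0
  have hre : δ.re ≠ 0 := by
    intro h0
    have hconj : (starRingEnd ℂ) δ = -δ := by
      apply Complex.ext <;> simp [h0]
    have hσx : σ (T + δ • U) = T + δ • U := by
      rw [map_add, hσT, hσsmul, hσU, hconj]
      simp
    have hxσ : T + δ • U ∈ Submodule.map σ
        ((Submodule.span ℂ ({T + δ • U, q • V + r • W} : Set L)).restrictScalars ℝ) :=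
      ⟨T + δ • U, hxmem, hσx⟩
    exact hx0 (Submodule.disjoint_def.mp hdisj _ hxmem hxσ)
  refine ⟨?_, hre⟩
  -- bracket computation
  have hbr : ⁅T + δ • U, q • V + r • W⁆ = (δ * q) • V + (-(δ * r)) • W := by
    simp only [add_lie, lie_add, smul_lie, lie_smul, hTV, hTW, hUV, hUW]
    module
  have hmem := hsub _ hxmem _ hymem
  rw [hbr] at hmem
  obtain ⟨a, b, hab⟩ := Submodule.mem_span_pair.mp hmem
  have hsum : a • T + (a * δ) • U + (b * q - δ * q) • V + (b * r + δ * r) • W = 0 := by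
    have : a • T + (a * δ) • U + (b * q - δ * q) • V + (b * r + δ * r) • W
        = (a • (T + δ • U) + b • (q • V + r • W)) - ((δ * q) • V + (-(δ * r)) • W) := by
      module
    rw [this, hab, sub_self]
  have hzero : ∀ i, (![a, a * δ, b * q - δ * q, b * r + δ * r] : Fin 4 → ℂ) i = 0 := by
    apply Fintype.linearIndependent_iff.mp hindep
    rw [Fin.sum_univ_four]
    simpa using hsum
  have h2 : b * q - δ * q = 0 := by simpa using hzero 2
  have h3 : b * r + δ * r = 0 := by simpa using hzero 3
  by_cases hq : q = 0
  · refine Or.inr ⟨hq, ?_⟩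
    intro hr
    exact hy0 (by simp [hq, hr])
  · refine Or.inl ⟨hq, ?_⟩
    have hb : b = δ := by
      have := sub_eq_zero.mp h2
      have := mul_right_cancel₀ hq this
      exact this
    rw [hb] at h3
    have : (2 * δ) * r = 0 := by ring_nf; ring_nf at h3; linear_combination h3
    rcases mul_eq_zero.mp this with h | h
    · exact absurd (by simpa using h) hδ
    · exact h
end

section
/- Let gh = ℝ ⊕ h_{2m+1} with standard basis {T, X_i, Y_i, Z : i = 1,…,m}, non-zero brackets [X_i,Y_i] = Z, and T, Z central. For each δ = c + id ∈ ℂ with c ≠ 0 and each choice of signs ε_i = ±1, the endomorphism J defined by J(T - dZ) = cZ, J(cZ) = -(T - dZ), JX_i = ε_i Y_i, JY_i = -ε_i X_i satisfies J² = -Id and has vanishing Nijenhuis tensor, i.e. is a complex structure on gh. -/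
/-- The Lie algebra `gh_{2m+2} = ℝ ⊕ h_{2m+1}` as a vector space, with coordinates
`(t, z, x, y)` corresponding to `tT + zZ + Σ x_i X_i + Σ y_i Y_i`. -/
abbrev GH (m : ℕ) := ℝ × ℝ × (Fin m → ℝ) × (Fin m → ℝ)

/-- The bracket of `gh_{2m+2}`: the only non-zero brackets are `[X_i, Y_i] = Z`. -/
def ghBracket {m : ℕ} (u v : GH m) : GH m :=
  (0, ∑ i : Fin m, (u.2.2.1 i * v.2.2.2 i - v.2.2.1 i * u.2.2.2 i), 0, 0)

def ghT (m : ℕ) : GH m := (1, 0, 0, 0)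
def ghZ (m : ℕ) : GH m := (0, 1, 0, 0)
def ghX {m : ℕ} (i : Fin m) : GH m := (0, 0, Pi.single i 1, 0)
def ghY {m : ℕ} (i : Fin m) : GH m := (0, 0, 0, Pi.single i 1)

lemma decomp {m : ℕ} (v : GH m) :
    v = v.1 • ghT m + v.2.1 • ghZ m + (∑ i, v.2.2.1 i • ghX i) + (∑ i, v.2.2.2 i • ghY i) := by
  refine Prod.ext ?_ (Prod.ext ?_ (Prod.ext ?_ ?_)) <;>
    simp [ghT, ghZ, ghX, ghY, Prod.fst_sum, Prod.snd_sum] <;>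
    · funext j
      simp [Finset.sum_apply, Pi.single_apply, mul_comm]


/-- for each `δ = c + id` with `c ≠ 0` and signs `ε_i = ±1`, the
endomorphism `J` with `J(T - dZ) = cZ`, `J(cZ) = -(T - dZ)`, `JX_i = ε_i Y_i`,
`JY_i = -ε_i X_i` satisfies `J² = -Id` and has vanishing Nijenhuis tensor, i.e. is a
complex structure on `gh = ℝ ⊕ h_{2m+1}`. -/
theorem stmt9 (m : ℕ) (c d : ℝ) (hc : c ≠ 0)
    (ε : Fin m → ℝ) (hε : ∀ i, ε i = 1 ∨ ε i = -1)
    (J : GH m →ₗ[ℝ] GH m)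
    (hJ1 : J (ghT m - d • ghZ m) = c • ghZ m)
    (hJ2 : J (c • ghZ m) = -(ghT m - d • ghZ m))
    (hJX : ∀ i, J (ghX i) = ε i • ghY i)
    (hJY : ∀ i, J (ghY i) = -(ε i • ghX i)) :
    (∀ v : GH m, J (J v) = -v) ∧
    (∀ u v : GH m,
      ghBracket (J u) (J v) - ghBracket u v - J (ghBracket u (J v)) -
        J (ghBracket (J u) v) = 0) := by
  have hε2 : ∀ i, ε i * ε i = 1 := fun i => by rcases hε i with h | h <;> rw [h] <;> norm_num
  have hJZ : J (ghZ m) = (-c⁻¹) • ghT m + (c⁻¹ * d) • ghZ m := by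
    have h := hJ2
    rw [map_smul] at h
    have h2 : J (ghZ m) = c⁻¹ • (-(ghT m - d • ghZ m)) := by
      rw [← h, smul_smul, inv_mul_cancel₀ hc, one_smul]
    rw [h2]
    ext <;> simp [ghT, ghZ] <;> ring
  have hJT : J (ghT m) = (-(c⁻¹ * d)) • ghT m + (c + c⁻¹ * d * d) • ghZ m := by
    have h := hJ1
    rw [map_sub, map_smul, hJZ] at h
    have h2 : J (ghT m) = c • ghZ m + d • ((-c⁻¹) • ghT m + (c⁻¹ * d) • ghZ m) := by
      rw [← h]; abel
    rw [h2]
    ext <;> simp [ghT, ghZ] <;> ring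
  have hJv : ∀ v : GH m, J v =
      (-(c⁻¹ * d) * v.1 + -c⁻¹ * v.2.1,
       (c + c⁻¹ * d * d) * v.1 + (c⁻¹ * d) * v.2.1,
       fun i => -(ε i * v.2.2.2 i),
       fun i => ε i * v.2.2.1 i) := by
    intro v
    conv_lhs => rw [decomp v]
    rw [map_add, map_add, map_add, map_smul, map_smul, map_sum, map_sum, hJT, hJZ]
    simp only [map_smul, hJX, hJY]
    refine Prod.ext ?_ (Prod.ext ?_ (Prod.ext ?_ ?_)) <;>
      simp [ghT, ghZ, ghX, ghY, Prod.fst_sum, Prod.snd_sum, smul_smul] <;>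
      try ring_nf
    all_goals
      funext j
      simp [Finset.sum_apply, Pi.single_apply, mul_comm]
      try ring
  refine ⟨?_, ?_⟩
  · intro v
    rw [hJv, hJv]
    refine Prod.ext ?_ (Prod.ext ?_ (Prod.ext ?_ ?_)) <;> simp
    · field_simp; ring
    · field_simp; ring
    · funext j; simp; linear_combination v.2.2.1 j * hε2 j
    · funext j; simp; linear_combination v.2.2.2 j * hε2 j
  · intro u v
    have hsum : ∑ i : Fin m,
          (-(ε i * u.2.2.2 i) * (ε i * v.2.2.1 i) - -(ε i * v.2.2.2 i) * (ε i * u.2.2.1 i))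
        = ∑ i : Fin m, (u.2.2.1 i * v.2.2.2 i - v.2.2.1 i * u.2.2.2 i) :=
      Finset.sum_congr rfl fun i _ => by
        linear_combination (u.2.2.1 i * v.2.2.2 i - v.2.2.1 i * u.2.2.2 i) * hε2 i
    have hBJ : ghBracket (J u) (J v) = ghBracket u v := by
      simp only [hJv, ghBracket, hsum]
    have hB0 : ghBracket u (J v) + ghBracket (J u) v = 0 := by
      simp only [hJv, ghBracket]
      refine Prod.ext (by norm_num) (Prod.ext ?_ (by norm_num))
      simp only [Prod.snd_add, Prod.fst_add, Prod.snd_zero, Prod.fst_zero]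
      rw [← Finset.sum_add_distrib]
      refine Finset.sum_eq_zero fun i _ => ?_
      ring
    have hJ0 : J (ghBracket u (J v)) + J (ghBracket (J u) v) = 0 := by
      rw [← map_add, hB0, map_zero]
    rw [hBJ, sub_self, zero_sub]
    have hrw : -J (ghBracket u (J v)) - J (ghBracket (J u) v)
        = -(J (ghBracket u (J v)) + J (ghBracket (J u) v)) := by abel
    rw [hrw, hJ0, neg_zero]
end

section
/- On g₂ = ℝ ⊕ su(2) with basis T (central) and X,Y,Z with brackets [X,Y] = -Z, [Z,X] = -Y, [Z,Y] = X, consider the lcK form ω_ψ = ψ ∧ t + dψ where ψ = ax + by + cz (a,b,c ∈ ℝ) in the dual basis, and the complex structure J with JY = X, JX = -Y, JT = Z, JZ = -T. Then the bilinear form ⟨U,V⟩ := ω_ψ(JU,V) is symmetric and positive definite if and only if a = b = 0 and c > 0. -/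
/-- `g₂ = ℝ ⊕ su(2)` as a vector space, coordinates `(t, x, y, z)` w.r.t. the basis
`(T, X, Y, Z)` where `T` is central and `[X,Y] = -Z`, `[Z,X] = -Y`, `[Z,Y] = X`. -/
abbrev G2 := ℝ × ℝ × ℝ × ℝ

/-- The 1-form `ψ = a x + b y + c z`. -/
def psi2 (a b c : ℝ) (U : G2) : ℝ := a * U.2.1 + b * U.2.2.1 + c * U.2.2.2

/-- The lcK form `ω_ψ = ψ ∧ t + dψ`, where in the dual basis `dt = 0`, `dx = y∧z`,
`dy = z∧x`, `dz = x∧y`, so that `dψ = a y∧z + b z∧x + c x∧y`. -/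
def omega2 (a b c : ℝ) (U V : G2) : ℝ :=
  psi2 a b c U * V.1 - psi2 a b c V * U.1 +
    a * (U.2.2.1 * V.2.2.2 - U.2.2.2 * V.2.2.1) +
    b * (U.2.2.2 * V.2.1 - U.2.1 * V.2.2.2) +
    c * (U.2.1 * V.2.2.1 - U.2.2.1 * V.2.1)

/-- The complex structure `J` with `JY = X`, `JX = -Y`, `JT = Z`, `JZ = -T`. -/
def J2 (U : G2) : G2 := (-U.2.2.2, U.2.2.1, -U.2.1, U.1)

/-- on `g₂ = ℝ ⊕ su(2)`, the bilinear form `⟨U,V⟩ = ω_ψ(JU, V)` is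
symmetric and positive definite iff `a = b = 0` and `c > 0`. -/
theorem stmt11 (a b c : ℝ) :
    ((∀ U V : G2, omega2 a b c (J2 U) V = omega2 a b c (J2 V) U) ∧
      (∀ U : G2, U ≠ 0 → 0 < omega2 a b c (J2 U) U)) ↔
    (a = 0 ∧ b = 0 ∧ 0 < c) := by
  constructor
  · rintro ⟨hsym, hpos⟩
    have hb := hsym (1,0,0,0) (0,1,0,0)
    have ha := hsym (1,0,0,0) (0,0,1,0)
    simp only [omega2, psi2, J2] at hb ha
    have ha0 : a = 0 := by nlinarith
    have hb0 : b = 0 := by nlinarith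
    refine ⟨ha0, hb0, ?_⟩
    have hc := hpos (1,0,0,0) (by simp [Prod.ext_iff])
    simp only [omega2, psi2, J2] at hc
    linarith
  · rintro ⟨ha, hb, hc⟩
    subst ha; subst hb
    constructor
    · intro U V
      simp only [omega2, psi2, J2]
      ring
    · intro U hU
      have : omega2 0 0 c (J2 U) U
          = c * (U.1^2 + U.2.1^2 + U.2.2.1^2 + U.2.2.2^2) := by
        simp only [omega2, psi2, J2]; ring
      rw [this]
      have hne : U.1^2 + U.2.1^2 + U.2.2.1^2 + U.2.2.2^2 > 0 := by
        by_contra hle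
        push_neg at hle
        have h1 : U.1 = 0 := by nlinarith [sq_nonneg U.1, sq_nonneg U.2.1, sq_nonneg U.2.2.1, sq_nonneg U.2.2.2]
        have h2 : U.2.1 = 0 := by nlinarith [sq_nonneg U.1, sq_nonneg U.2.1, sq_nonneg U.2.2.1, sq_nonneg U.2.2.2]
        have h3 : U.2.2.1 = 0 := by nlinarith [sq_nonneg U.1, sq_nonneg U.2.1, sq_nonneg U.2.2.1, sq_nonneg U.2.2.2]
        have h4 : U.2.2.2 = 0 := by nlinarith [sq_nonneg U.1, sq_nonneg U.2.1, sq_nonneg U.2.2.1, sq_nonneg U.2.2.2]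
        exact hU (Prod.ext h1 (Prod.ext h2 (Prod.ext h3 h4)))
      positivity
end

section
/- Let g₁ = ℝ ⊕ sl(2,ℝ) with basis T (central), X, Y, Z satisfying [X,Y] = Z, [Z,X] = -Y, [Z,Y] = X, and let ⟨·,·⟩ be the metric ω_ψ(J·,·) with ψ = ax + by + cz (c > 0, c² > a²+b² ) and J as above. Let ξ = (1/D)(cT - bX + aY), D = c² - a² - b², be the metric dual of the Lee form θ = t. Then ξ satisfies ⟨[ξ,U],V⟩ + ⟨U,[ξ,V]⟩ = 0 for all U,V ∈ g₁ if and only if a = b = 0. -/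
/-!
The Lee field `ξ = (1/D)(cT - bX + aY)` acts by `ad_ξ X = -(a/D) Z` and `ad_ξ Y = -(b/D) Z`,
while `⟨Z, X⟩ = a` and `⟨Z, Y⟩ = b`; so the Killing defect on `(X, X)` and `(Y, Y)` is
`-2a²/D` and `-2b²/D`. Conversely, for `a = b = 0` the field `ξ` is a multiple of the central
vector `T`, so `ad_ξ = 0`.
-/

/-- `g₁ = ℝ ⊕ sl(2,ℝ)` as a vector space, coordinates `(t, x, y, z)` w.r.t. the basis
`(T, X, Y, Z)` where `T` is central and `[X,Y] = Z`, `[Z,X] = -Y`, `[Z,Y] = X`. -/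
abbrev G1 := ℝ × ℝ × ℝ × ℝ

/-- The bracket of `g₁`: `[X,Y] = Z`, `[Z,X] = -Y`, `[Z,Y] = X`, `T` central. -/
def braG1 (U V : G1) : G1 :=
  (0, U.2.2.2 * V.2.2.1 - U.2.2.1 * V.2.2.2,
      U.2.1 * V.2.2.2 - U.2.2.2 * V.2.1,
      U.2.1 * V.2.2.1 - U.2.2.1 * V.2.1)

/-- The 1-form `ψ = a x + b y + c z`. -/
def psi1 (a b c : ℝ) (U : G1) : ℝ := a * U.2.1 + b * U.2.2.1 + c * U.2.2.2

/-- The lcK form `ω_ψ = ψ ∧ t + dψ` (with `dx = y∧z`, `dy = z∧x`, `dz = y∧x`). -/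
def omega1 (a b c : ℝ) (U V : G1) : ℝ :=
  psi1 a b c U * V.1 - psi1 a b c V * U.1 +
    a * (U.2.2.1 * V.2.2.2 - U.2.2.2 * V.2.2.1) +
    b * (U.2.2.2 * V.2.1 - U.2.1 * V.2.2.2) +
    c * (U.2.2.1 * V.2.1 - U.2.1 * V.2.2.1)

/-- The complex structure `J` with `JX = Y`, `JY = -X`, `JT = Z`, `JZ = -T`. -/
def J1 (U : G1) : G1 := (-U.2.2.2, -U.2.2.1, U.2.1, U.1)

/-- The metric `⟨U,V⟩ = ω_ψ(JU,V)`. -/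
def met1 (a b c : ℝ) (U V : G1) : ℝ := omega1 a b c (J1 U) V

lemma braG1_eq_zero_of_snd_eq_zero {ξ : G1} (hξ : ξ.2 = 0) (U : G1) : braG1 ξ U = 0 := by
  simp [braG1, hξ]

lemma met1_zero_left (a b c : ℝ) (V : G1) : met1 a b c 0 V = 0 := by
  simp [met1, omega1, psi1, J1]

lemma met1_zero_right (a b c : ℝ) (U : G1) : met1 a b c U 0 = 0 := by
  simp [met1, omega1, psi1, J1]

lemma met1_braG1_smul_X_add (a b c s : ℝ) :
    met1 a b c (braG1 (s • (c, -b, a, 0)) (0, 1, 0, 0)) (0, 1, 0, 0) +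
      met1 a b c (0, 1, 0, 0) (braG1 (s • (c, -b, a, 0)) (0, 1, 0, 0)) = -(2 * s * a ^ 2) := by
  simp only [met1, omega1, psi1, J1, braG1, Prod.smul_mk, smul_eq_mul]
  ring

lemma met1_braG1_smul_Y_add (a b c s : ℝ) :
    met1 a b c (braG1 (s • (c, -b, a, 0)) (0, 0, 1, 0)) (0, 0, 1, 0) +
      met1 a b c (0, 0, 1, 0) (braG1 (s • (c, -b, a, 0)) (0, 0, 1, 0)) = -(2 * s * b ^ 2) := by
  simp only [met1, omega1, psi1, J1, braG1, Prod.smul_mk, smul_eq_mul]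
  ring

theorem stmt14_general (a b c : ℝ) (h : a ^ 2 + b ^ 2 < c ^ 2) :
    (∀ U V : G1,
        met1 a b c (braG1 ((1 / (c ^ 2 - a ^ 2 - b ^ 2)) • ((c : ℝ), -b, a, (0 : ℝ))) U) V +
          met1 a b c U (braG1 ((1 / (c ^ 2 - a ^ 2 - b ^ 2)) • ((c : ℝ), -b, a, (0 : ℝ))) V)
          = 0) ↔
      (a = 0 ∧ b = 0) := by
  set s := 1 / (c ^ 2 - a ^ 2 - b ^ 2)
  have hs : s ≠ 0 := one_div_ne_zero (by linarith)
  constructor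
  · intro hKilling
    have hX := hKilling (0, 1, 0, 0) (0, 1, 0, 0)
    have hY := hKilling (0, 0, 1, 0) (0, 0, 1, 0)
    rw [met1_braG1_smul_X_add] at hX
    rw [met1_braG1_smul_Y_add] at hY
    constructor
    · simpa [hs] using hX
    · simpa [hs] using hY
  · rintro ⟨rfl, rfl⟩ U V
    have hcentral : (s • (c, -0, 0, 0) : G1).2 = 0 := by simp
    simp only [braG1_eq_zero_of_snd_eq_zero hcentral, met1_zero_left, met1_zero_right, add_zero]

/-- with `c > 0`, `c² > a² + b²`, `D = c² - a² - b²` and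
`ξ = (1/D)(cT - bX + aY)` the metric dual of the Lee form `θ = t`, the Lee field `ξ`
is a Killing field (`⟨[ξ,U],V⟩ + ⟨U,[ξ,V]⟩ = 0` for all `U, V`) iff `a = b = 0`. -/
theorem stmt14 (a b c : ℝ) (hc : 0 < c) (h : a ^ 2 + b ^ 2 < c ^ 2) :
    (∀ U V : G1,
        met1 a b c (braG1 ((1 / (c ^ 2 - a ^ 2 - b ^ 2)) • ((c : ℝ), -b, a, (0 : ℝ))) U) V +
          met1 a b c U (braG1 ((1 / (c ^ 2 - a ^ 2 - b ^ 2)) • ((c : ℝ), -b, a, (0 : ℝ))) V)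
          = 0) ↔
      (a = 0 ∧ b = 0) :=
  stmt14_general a b c h
end

section
/- On gh_{2m+2} = ℝ ⊕ h_{2m+1} with the fundamental form ω_ψ = ψ∧t + dψ, where ψ = Σ a_i x_i + Σ b_j y_j + c₀ z, and the complex structure J given by J(T - dZ) = cZ, J(cZ) = -(T - dZ), JX_i = ε_i Y_i (c ≠ 0, ε_i = ±1): the bilinear form ⟨U,V⟩ := ω_ψ(JU,V) is symmetric and positive definite if and only if a_i = b_i = 0 for all i, c·c₀ > 0, and sgn(c₀)·ε_i = 1 for all i. -/
/-- The 1-form `ψ = Σ a_i x_i + Σ b_j y_j + c₀ z`. -/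
def psiGH {m : ℕ} (a b : Fin m → ℝ) (c₀ : ℝ) (U : GH m) : ℝ :=
  (∑ i, a i * U.2.2.1 i) + (∑ j, b j * U.2.2.2 j) + c₀ * U.2.1

/-- The fundamental form `ω_ψ = ψ ∧ t + dψ`, with `dt = 0`, `dx_i = dy_j = 0`,
`dz = -Σ x_i ∧ y_i`, so `dψ = -c₀ Σ x_i ∧ y_i`. -/
def omegaGH {m : ℕ} (a b : Fin m → ℝ) (c₀ : ℝ) (U V : GH m) : ℝ :=
  psiGH a b c₀ U * V.1 - psiGH a b c₀ V * U.1 -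
    c₀ * ∑ i, (U.2.2.1 i * V.2.2.2 i - U.2.2.2 i * V.2.2.1 i)

/-- The complex structure `J` with `J(T - dZ) = cZ`, `J(cZ) = -(T - dZ)`,
`JX_i = ε_i Y_i`, `JY_i = -ε_i X_i`. -/
noncomputable def JGH {m : ℕ} (c d : ℝ) (ε : Fin m → ℝ) (U : GH m) : GH m :=
  (-(d / c) * U.1 - (1 / c) * U.2.1,
   ((c ^ 2 + d ^ 2) / c) * U.1 + (d / c) * U.2.1,
   fun i => -(ε i) * U.2.2.2 i,
   fun i => ε i * U.2.2.1 i)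

theorem div_pos_iff_mul_pos {α : Type*} [Field α] [LinearOrder α] [IsStrictOrderedRing α]
    {a b : α} : 0 < a / b ↔ 0 < b * a := by
  rw [div_pos_iff, mul_pos_iff]
  tauto

theorem Real.sign_mul_eq_one_iff {x e : ℝ} (he : e = 1 ∨ e = -1) :
    Real.sign x * e = 1 ↔ 0 < x * e := by
  rcases lt_trichotomy x 0 with hx | rfl | hx
  · rw [Real.sign_of_neg hx]
    rcases he with rfl | rfl <;> constructor <;> intro <;> linarith
  · simp
  · rw [Real.sign_of_pos hx]
    rcases he with rfl | rfl <;> constructor <;> intro <;> linarith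

namespace GH

variable {m : ℕ}

def X (k : Fin m) : GH m := (0, 0, Pi.single k 1, 0)

def Y (k : Fin m) : GH m := (0, 0, 0, Pi.single k 1)

def Z : GH m := (0, 1, 0, 0)

theorem X_ne_zero (k : Fin m) : X k ≠ 0 := fun h => by
  simpa [X] using congr_fun (congr_arg (·.2.2.1) h) k

theorem Z_ne_zero : (Z : GH m) ≠ 0 := fun h => by
  simpa [Z] using congr_arg (·.2.1) h

end GH

section

variable {m : ℕ} (a b : Fin m → ℝ) (c₀ c d : ℝ) (ε : Fin m → ℝ)

theorem omegaGH_JGH_Z_X (k : Fin m) :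
    omegaGH a b c₀ (JGH c d ε GH.Z) (GH.X k) = a k / c := by
  simp [omegaGH, psiGH, JGH, GH.X, GH.Z, Pi.single_apply, div_eq_mul_inv]

theorem omegaGH_JGH_X_Z (k : Fin m) : omegaGH a b c₀ (JGH c d ε (GH.X k)) GH.Z = 0 := by
  simp [omegaGH, psiGH, JGH, GH.X, GH.Z]

theorem omegaGH_JGH_Z_Y (k : Fin m) :
    omegaGH a b c₀ (JGH c d ε GH.Z) (GH.Y k) = b k / c := by
  simp [omegaGH, psiGH, JGH, GH.Y, GH.Z, Pi.single_apply, div_eq_mul_inv]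

theorem omegaGH_JGH_Y_Z (k : Fin m) : omegaGH a b c₀ (JGH c d ε (GH.Y k)) GH.Z = 0 := by
  simp [omegaGH, psiGH, JGH, GH.Y, GH.Z]

theorem omegaGH_JGH_X_X (k : Fin m) :
    omegaGH a b c₀ (JGH c d ε (GH.X k)) (GH.X k) = c₀ * ε k := by
  simp [omegaGH, psiGH, JGH, GH.X, Pi.single_apply]

theorem omegaGH_JGH_Z_Z : omegaGH a b c₀ (JGH c d ε GH.Z) GH.Z = c₀ / c := by
  simp [omegaGH, psiGH, JGH, GH.Z, div_eq_mul_inv]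

theorem omegaGH_zero_JGH (U V : GH m) :
    omegaGH 0 0 c₀ (JGH c d ε U) V =
      c₀ / c * (c * U.1 * (c * V.1) + (d * U.1 + U.2.1) * (d * V.1 + V.2.1)) +
        ∑ i, c₀ * ε i * (U.2.2.1 i * V.2.2.1 i + U.2.2.2 i * V.2.2.2 i) := by
  have hsum : c₀ * ∑ i, (-ε i * U.2.2.2 i * V.2.2.2 i - ε i * U.2.2.1 i * V.2.2.1 i) =
      -∑ i, c₀ * ε i * (U.2.2.1 i * V.2.2.1 i + U.2.2.2 i * V.2.2.2 i) := by
    rw [Finset.mul_sum, ← Finset.sum_neg_distrib]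
    exact Finset.sum_congr rfl fun i _ => by ring
  simp only [omegaGH, psiGH, JGH, Pi.zero_apply, zero_mul, Finset.sum_const_zero, zero_add, hsum]
  ring

theorem omegaGH_zero_JGH_comm (U V : GH m) :
    omegaGH 0 0 c₀ (JGH c d ε U) V = omegaGH 0 0 c₀ (JGH c d ε V) U := by
  simp only [omegaGH_zero_JGH]
  congr 1
  · ring
  · exact Finset.sum_congr rfl fun i _ => by ring

variable {c₀ c d ε} in
theorem omegaGH_zero_JGH_self_pos (hcc : 0 < c * c₀) (hce : ∀ i, 0 < c₀ * ε i) {U : GH m}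
    (hU : U ≠ 0) : 0 < omegaGH 0 0 c₀ (JGH c d ε U) U := by
  obtain ⟨t, z, x, y⟩ := U
  have hq : 0 < c₀ / c := div_pos_iff_mul_pos.2 hcc
  have hc : c ≠ 0 := by rintro rfl; simp at hcc
  rw [omegaGH_zero_JGH]
  have hA : 0 ≤ c₀ / c * (c * t * (c * t) + (d * t + z) * (d * t + z)) :=
    mul_nonneg hq.le (add_nonneg (mul_self_nonneg _) (mul_self_nonneg _))
  have hterm : ∀ i, 0 ≤ c₀ * ε i * (x i * x i + y i * y i) := fun i =>
    mul_nonneg (hce i).le (add_nonneg (mul_self_nonneg _) (mul_self_nonneg _))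
  have hS := Finset.sum_nonneg fun i (_ : i ∈ Finset.univ) => hterm i
  refine lt_of_le_of_ne (add_nonneg hA hS) fun h0 => hU ?_
  obtain ⟨hA0, hS0⟩ := (add_eq_zero_iff_of_nonneg hA hS).1 h0.symm
  obtain ⟨hct, hz⟩ := mul_self_add_mul_self_eq_zero.1 ((mul_eq_zero.1 hA0).resolve_left hq.ne')
  obtain rfl : t = 0 := (mul_eq_zero.1 hct).resolve_left hc
  obtain rfl : z = 0 := by simpa using hz
  have hxy : ∀ i, x i = 0 ∧ y i = 0 := fun i => mul_self_add_mul_self_eq_zero.1 <|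
    (mul_eq_zero.1 ((Finset.sum_eq_zero_iff_of_nonneg fun i _ => hterm i).1 hS0 i
      (Finset.mem_univ i))).resolve_left (hce i).ne'
  simp only [Prod.mk_eq_zero, true_and]
  exact ⟨funext fun i => (hxy i).1, funext fun i => (hxy i).2⟩

end

/-- on `gh_{2m+2}`, the bilinear form `⟨U,V⟩ = ω_ψ(JU,V)` is symmetric
and positive definite iff `a_i = b_i = 0` for all `i`, `c·c₀ > 0`, and
`sgn(c₀)·ε_i = 1` for all `i`. -/
theorem stmt15 (m : ℕ) (c d : ℝ) (hc : c ≠ 0)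
    (ε : Fin m → ℝ) (hε : ∀ i, ε i = 1 ∨ ε i = -1)
    (a b : Fin m → ℝ) (c₀ : ℝ) :
    ((∀ U V : GH m, omegaGH a b c₀ (JGH c d ε U) V = omegaGH a b c₀ (JGH c d ε V) U) ∧
      (∀ U : GH m, U ≠ 0 → 0 < omegaGH a b c₀ (JGH c d ε U) U)) ↔
    ((∀ i, a i = 0) ∧ (∀ i, b i = 0) ∧ 0 < c * c₀ ∧ ∀ i, Real.sign c₀ * ε i = 1) := by
  simp only [fun i => Real.sign_mul_eq_one_iff (x := c₀) (hε i)]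
  constructor
  · rintro ⟨hsym, hpos⟩
    refine ⟨fun k => ?_, fun k => ?_, ?_, fun k => ?_⟩
    · have h := hsym GH.Z (GH.X k)
      rw [omegaGH_JGH_Z_X, omegaGH_JGH_X_Z, div_eq_zero_iff] at h
      exact h.resolve_right hc
    · have h := hsym GH.Z (GH.Y k)
      rw [omegaGH_JGH_Z_Y, omegaGH_JGH_Y_Z, div_eq_zero_iff] at h
      exact h.resolve_right hc
    · simpa [omegaGH_JGH_Z_Z, div_pos_iff_mul_pos] using hpos GH.Z GH.Z_ne_zero
    · simpa [omegaGH_JGH_X_X] using hpos (GH.X k) (GH.X_ne_zero k)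
  · rintro ⟨ha, hb, hcc, hce⟩
    obtain rfl : a = 0 := funext ha
    obtain rfl : b = 0 := funext hb
    exact ⟨omegaGH_zero_JGH_comm c₀ c d ε, fun U => omegaGH_zero_JGH_self_pos hcc hce⟩
end
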